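/- arXiv:math/0110334 — 5 statements merged into one kernel-verified Lean document; each statement's English description precedes it below -/
import Mathlib

section
/- Let A be a commutative ℚ-algebra and let ℓ, ℓ' ∈ A and L_1,…,L_n, L'_1,…,L'_n ∈ A satisfy ℓ' = -ℓ and L_k + (-1)^k L'_k = ((-1)^k / k!) ℓ^k for all 1 ≤ k ≤ n. If a_1,…,a_n ∈ ℚ satisfy a_n = 1 and Σ_{m=1}^n a_m (-1)^m / m! = 0, then Σ_{m=1}^n a_m L_m ℓ^{n-m} + (-1)^n Σ_{m=1}^n a_m L'_m (ℓ')^{n-m} = 0. -/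
/-! Since ℓ' = -ℓ, the sign (-1)^n (-1)^(n-m) = (-1)^m lets the functional equation of L_m collapse
the m-th pair of summands to a_m (-1)^m / m! · ℓ^n, and these cancel by the hypothesis on the a_m. -/

theorem add_neg_one_pow_mul_mul_neg_pow {A : Type*} [CommRing A] {m n : ℕ} (hmn : m ≤ n)
    (x y ℓ : A) :
    x * ℓ ^ (n - m) + (-1) ^ n * (y * (-ℓ) ^ (n - m)) = (x + (-1) ^ m * y) * ℓ ^ (n - m) := by
  obtain ⟨k, rfl⟩ := Nat.exists_eq_add_of_le hmn
  have hsq : ((-1 : A)) ^ k * (-1) ^ k = 1 := by rw [← mul_pow]; simp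
  rw [Nat.add_sub_cancel_left, neg_pow, pow_add]
  linear_combination (-1) ^ m * y * ℓ ^ k * hsq

theorem smul_mul_pow_add_neg_one_pow_mul_smul_mul_neg_pow {R A : Type*} [CommRing R] [CommRing A]
    [Algebra R A] {m n : ℕ} (hmn : m ≤ n) (c b : R) (ℓ x y : A)
    (hxy : x + (-1) ^ m * y = b • ℓ ^ m) :
    c • (x * ℓ ^ (n - m)) + (-1) ^ n * c • (y * (-ℓ) ^ (n - m)) = (c * b) • ℓ ^ n := by
  rw [mul_smul_comm, ← smul_add, add_neg_one_pow_mul_mul_neg_pow hmn, hxy, smul_mul_assoc,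
    ← pow_add, Nat.add_sub_cancel' hmn, smul_smul]

theorem stmt0_general {A : Type*} [CommRing A] [Algebra ℚ A]
    (n : ℕ) (ℓ ℓ' : A) (L L' : ℕ → A)
    (hℓ : ℓ' = -ℓ)
    (hfe : ∀ k ∈ Finset.Icc 1 n,
      L k + (-1 : A) ^ k * L' k = ((-1 : ℚ) ^ k / (Nat.factorial k : ℚ)) • ℓ ^ k)
    (a : ℕ → ℚ)
    (hsum : ∑ m ∈ Finset.Icc 1 n, a m * (-1) ^ m / (Nat.factorial m : ℚ) = 0) :
    (∑ m ∈ Finset.Icc 1 n, a m • (L m * ℓ ^ (n - m)))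
      + (-1 : A) ^ n * ∑ m ∈ Finset.Icc 1 n, a m • (L' m * ℓ' ^ (n - m)) = 0 := by
  subst hℓ
  rw [Finset.mul_sum, ← Finset.sum_add_distrib]
  calc _ = ∑ m ∈ Finset.Icc 1 n, (a m * (-1) ^ m / (Nat.factorial m : ℚ)) • ℓ ^ n := by
        refine Finset.sum_congr rfl fun m hm => ?_
        rw [mul_div_assoc]
        exact smul_mul_pow_add_neg_one_pow_mul_smul_mul_neg_pow (Finset.mem_Icc.mp hm).2 _ _ _ _ _
          (hfe m hm)
    _ = 0 := by rw [← Finset.sum_smul, hsum, zero_smul]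

theorem stmt0 {A : Type*} [CommRing A] [Algebra ℚ A]
    (n : ℕ) (ℓ ℓ' : A) (L L' : ℕ → A)
    (hℓ : ℓ' = -ℓ)
    (hfe : ∀ k ∈ Finset.Icc 1 n,
      L k + (-1 : A) ^ k * L' k = ((-1 : ℚ) ^ k / (Nat.factorial k : ℚ)) • ℓ ^ k)
    (a : ℕ → ℚ) (han : a n = 1)
    (hsum : ∑ m ∈ Finset.Icc 1 n, a m * (-1) ^ m / (Nat.factorial m : ℚ) = 0) :
    (∑ m ∈ Finset.Icc 1 n, a m • (L m * ℓ ^ (n - m)))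
      + (-1 : A) ^ n * ∑ m ∈ Finset.Icc 1 n, a m • (L' m * ℓ' ^ (n - m)) = 0 :=
  stmt0_general n ℓ ℓ' L L' hℓ hfe a hsum
end

section
/- Let A be a commutative ℚ-algebra, n ≥ 1, and let ℓ, ℓ', L, L', B ∈ A with elements Li_1,…,Li_n, Li'_1,…,Li'_n ∈ A. Suppose ℓ' = -ℓ and Li_k + (-1)^k Li'_k = -(1/k!) ℓ^k for all 1 ≤ k ≤ n. Define L_n = Σ_{m=0}^{n-1} ((-1)^m/m!) Li_{n-m} ℓ^m and L'_n = Σ_{m=0}^{n-1} ((-1)^m/m!) Li'_{n-m} (ℓ')^m. Then L_n + (-1)^n L'_n = ((-1)^n / n!) ℓ^n. -/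
lemma qsum_aux (n : ℕ) (hn : 1 ≤ n) :
    ∑ m ∈ Finset.range (n + 1),
      (-1 : ℚ) ^ m / ((Nat.factorial m : ℚ) * (Nat.factorial (n - m) : ℚ)) = 0 := by
  have h : ∀ m ∈ Finset.range (n + 1),
      (-1 : ℚ) ^ m / ((Nat.factorial m : ℚ) * (Nat.factorial (n - m) : ℚ))
        = ((-1 : ℚ) ^ m * (n.choose m : ℚ)) / (n.factorial : ℚ) := by
    intro m hm
    have hm' : m ≤ n := by simpa [Nat.lt_succ_iff] using hm
    rw [Nat.cast_choose ℚ hm']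
    have h1 : (m.factorial : ℚ) ≠ 0 := Nat.cast_ne_zero.mpr m.factorial_ne_zero
    have h2 : ((n - m).factorial : ℚ) ≠ 0 := Nat.cast_ne_zero.mpr (n - m).factorial_ne_zero
    have h3 : (n.factorial : ℚ) ≠ 0 := Nat.cast_ne_zero.mpr n.factorial_ne_zero
    field_simp
  rw [Finset.sum_congr rfl h, ← Finset.sum_div]
  have hz := Int.alternating_sum_range_choose (n := n)
  rw [if_neg (by omega : n ≠ 0)] at hz
  have : (∑ m ∈ Finset.range (n + 1), (-1 : ℚ) ^ m * (n.choose m : ℚ)) = 0 := by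
    calc (∑ m ∈ Finset.range (n + 1), (-1 : ℚ) ^ m * (n.choose m : ℚ))
        = ((∑ m ∈ Finset.range (n + 1), (-1 : ℤ) ^ m * (n.choose m : ℤ) : ℤ) : ℚ) := by
          push_cast; ring
      _ = 0 := by rw [hz]; norm_num
  rw [this, zero_div]

lemma qsum (n : ℕ) (hn : 1 ≤ n) :
    ∑ m ∈ Finset.range n,
      (-((-1 : ℚ) ^ m / ((Nat.factorial m : ℚ) * (Nat.factorial (n - m) : ℚ))))
      = (-1 : ℚ) ^ n / (Nat.factorial n : ℚ) := by
  have h := qsum_aux n hn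
  rw [Finset.sum_range_succ] at h
  have hlast : (-1 : ℚ) ^ n / ((Nat.factorial n : ℚ) * (Nat.factorial (n - n) : ℚ))
      = (-1 : ℚ) ^ n / (Nat.factorial n : ℚ) := by
    simp [Nat.sub_self]
  rw [hlast] at h
  rw [Finset.sum_neg_distrib]
  linarith [h]

theorem stmt7 {A : Type*} [CommRing A] [Algebra ℚ A]
    (n : ℕ) (hn : 1 ≤ n) (ℓ ℓ' : A) (Li Li' : ℕ → A)
    (hℓ : ℓ' = -ℓ)
    (hfe : ∀ k ∈ Finset.Icc 1 n,
      Li k + (-1 : A) ^ k * Li' k = -((1 / (Nat.factorial k : ℚ)) • ℓ ^ k)) :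
    (∑ m ∈ Finset.range n, ((-1 : ℚ) ^ m / (Nat.factorial m : ℚ)) • (Li (n - m) * ℓ ^ m))
      + (-1 : A) ^ n *
        ∑ m ∈ Finset.range n, ((-1 : ℚ) ^ m / (Nat.factorial m : ℚ)) • (Li' (n - m) * ℓ' ^ m)
      = ((-1 : ℚ) ^ n / (Nat.factorial n : ℚ)) • ℓ ^ n := by
  subst hℓ
  have key : ∀ m ∈ Finset.range n,
      ((-1 : ℚ) ^ m / (Nat.factorial m : ℚ)) • (Li (n - m) * ℓ ^ m)
        + (-1 : A) ^ n * (((-1 : ℚ) ^ m / (Nat.factorial m : ℚ)) • (Li' (n - m) * (-ℓ) ^ m))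
      = (-((-1 : ℚ) ^ m / ((Nat.factorial m : ℚ) * (Nat.factorial (n - m) : ℚ)))) • ℓ ^ n := by
    intro m hm
    rw [Finset.mem_range] at hm
    have hfe' := hfe (n - m) (by rw [Finset.mem_Icc]; omega)
    have hpow : ℓ ^ n = ℓ ^ (n - m) * ℓ ^ m := by rw [← pow_add]; congr 1; omega
    have hneg : (-1 : A) ^ n = (-1 : A) ^ (n - m) * (-1 : A) ^ m := by
      rw [← pow_add]; congr 1; omega
    have hnegl : (-ℓ) ^ m = (-1 : A) ^ m * ℓ ^ m := by rw [neg_pow]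
    have hmm : (-1 : A) ^ m * (-1 : A) ^ m = 1 := by
      rw [← pow_add, ← two_mul, pow_mul]; simp
    rw [hnegl, hneg, hpow]
    simp only [Algebra.smul_def] at hfe' ⊢
    have e1 : algebraMap ℚ A (-((-1 : ℚ) ^ m / ((Nat.factorial m : ℚ) * (Nat.factorial (n - m) : ℚ))))
        = - (algebraMap ℚ A ((-1 : ℚ) ^ m / (Nat.factorial m : ℚ)) *
            algebraMap ℚ A (1 / (Nat.factorial (n - m) : ℚ))) := by
      rw [← map_mul, ← map_neg]
      congr 1
      have h1 : (Nat.factorial m : ℚ) ≠ 0 := Nat.cast_ne_zero.mpr m.factorial_ne_zero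
      have h2 : ((n - m).factorial : ℚ) ≠ 0 := Nat.cast_ne_zero.mpr (n - m).factorial_ne_zero
      field_simp
    linear_combination (algebraMap ℚ A ((-1 : ℚ) ^ m / (Nat.factorial m : ℚ)) * ℓ ^ m) * hfe'
      - (ℓ ^ (n - m) * ℓ ^ m) * e1
      + (algebraMap ℚ A ((-1 : ℚ) ^ m / (Nat.factorial m : ℚ)) * Li' (n - m) * ℓ ^ m
          * (-1 : A) ^ (n - m)) * hmm
  rw [Finset.mul_sum, ← Finset.sum_add_distrib, Finset.sum_congr rfl key, ← Finset.sum_smul,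
    qsum n hn]
end

section
/- Let U ⊆ K be an open subset of a nontrivially normed field K of characteristic 0, fix z ∈ U, and let log, Li_1, Li_2, … : U → K be differentiable functions satisfying log'(S) = 1/S, Li_1'(S) = 1/(1-S), and Li_{k+1}'(S) = Li_k(S)/S for all k ≥ 1. For n ≥ 1 define g_n(S) = Li_n(S) - Σ_{k=0}^{n-1} (1/k!) (log(S) - log(z))^k Li_{n-k}(z). Then g_{n+1}'(S) = g_n(S)/S for all n ≥ 1, and g_n(z) = 0 for all n ≥ 1. -/
theorem stmt8 {K : Type*} [NontriviallyNormedField K] [CharZero K]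
    (U : Set K) (hU : IsOpen U) (z : K) (hz : z ∈ U)
    (log : K → K) (Li : ℕ → K → K)
    (hlog : ∀ S ∈ U, HasDerivAt log (1 / S) S)
    (hLi1 : ∀ S ∈ U, HasDerivAt (Li 1) (1 / (1 - S)) S)
    (hLi : ∀ k : ℕ, 1 ≤ k → ∀ S ∈ U, HasDerivAt (Li (k + 1)) (Li k S / S) S)
    (g : ℕ → K → K)
    (hg : ∀ (n : ℕ) (S : K), g n S = Li n S -
      ∑ k ∈ Finset.range n,
        (1 / (Nat.factorial k : K)) * ((log S - log z) ^ k * Li (n - k) z)) :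
    (∀ n : ℕ, 1 ≤ n → ∀ S ∈ U, HasDerivAt (g (n + 1)) (g n S / S) S) ∧
    (∀ n : ℕ, 1 ≤ n → g n z = 0) := by
  constructor
  · intro n hn S hS
    have hL : HasDerivAt (fun T => log T - log z) (1 / S) S :=
      (hlog S hS).sub_const _
    have hsum : HasDerivAt (fun T => ∑ k ∈ Finset.range (n + 1),
        (1 / (Nat.factorial k : K)) * ((log T - log z) ^ k * Li (n + 1 - k) z))
        (∑ k ∈ Finset.range (n + 1),
          (1 / (Nat.factorial k : K)) *
            (((k : K) * (log S - log z) ^ (k - 1) * (1 / S)) * Li (n + 1 - k) z)) S := by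
      apply HasDerivAt.fun_sum
      intro k hk
      exact ((hL.pow k).mul_const _).const_mul _
    have hmain : HasDerivAt (g (n + 1))
        (Li n S / S - ∑ k ∈ Finset.range (n + 1),
          (1 / (Nat.factorial k : K)) *
            (((k : K) * (log S - log z) ^ (k - 1) * (1 / S)) * Li (n + 1 - k) z)) S := by
      have hgfun : g (n + 1) = fun T => Li (n + 1) T - ∑ k ∈ Finset.range (n + 1),
          (1 / (Nat.factorial k : K)) * ((log T - log z) ^ k * Li (n + 1 - k) z) :=
        funext fun T => hg _ _
      rw [hgfun]
      exact (hLi n hn S hS).sub hsum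
    convert hmain using 1
    rw [hg, Finset.sum_range_succ']
    simp only [Nat.cast_zero, zero_mul, mul_zero, add_zero, Nat.succ_sub_succ,
      Nat.add_sub_cancel, Nat.cast_add, Nat.cast_one]
    rw [sub_div, Finset.sum_div]
    congr 1
    apply Finset.sum_congr rfl
    intro i _
    have h1 : ((i : K) + 1) ≠ 0 := by
      have := Nat.cast_ne_zero (R := K).mpr (Nat.succ_ne_zero i)
      push_cast at this
      exact this
    have h2 : ((i.factorial : K)) ≠ 0 := Nat.cast_ne_zero.mpr (Nat.factorial_ne_zero i)
    rw [Nat.factorial_succ, Nat.cast_mul, div_eq_mul_one_div _ S]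
    push_cast
    generalize (1 / S : K) = t
    field_simp
    ring_nf
    simp
  · intro n hn
    rw [hg, sub_self]
    rw [Finset.sum_eq_single_of_mem 0 (Finset.mem_range.mpr hn)]
    · simp
    · intro k _ hk
      simp [zero_pow hk]
end

section
/- Let A be a commutative ℚ-algebra, n ≥ 0, and let x, y ∈ A and li_1,…,li_{n+1}, Li_1,…,Li_{n+1} ∈ A. Define f_{k+1} = Li_{k+1} - Σ_{l=0}^{k} (1/l!)(x - y)^l li_{k+1-l} for 0 ≤ k ≤ n, define L_{n+1}(S) = Σ_{m=0}^{n} ((-1)^m/m!) Li_{n+1-m} x^m and L_{n+1}(z) = Σ_{m=0}^{n} ((-1)^m/m!) li_{n+1-m} y^m. Then -Σ_{k=0}^{n} (-1)^k (n!/(n-k)!) f_{k+1} x^{n-k} = (-1)^n n! (L_{n+1}(z) - L_{n+1}(S)). -/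
open Finset

private theorem tri9 {M : Type*} [AddCommMonoid M] (n : ℕ) (f : ℕ → ℕ → M) :
    ∑ k ∈ Finset.range (n+1), ∑ l ∈ Finset.range (k+1), f k l
      = ∑ j ∈ Finset.range (n+1), ∑ l ∈ Finset.range (n - j + 1), f (j + l) l := by
  rw [Finset.sum_sigma', Finset.sum_sigma']
  refine Finset.sum_nbij' (fun x : (_ : ℕ) × ℕ ↦ (⟨x.1 - x.2, x.2⟩ : (_ : ℕ) × ℕ))
    (fun x : (_ : ℕ) × ℕ ↦ (⟨x.1 + x.2, x.2⟩ : (_ : ℕ) × ℕ)) ?_ ?_ ?_ ?_ ?_ <;>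
    rintro ⟨a, b⟩ h <;>
    simp only [Finset.mem_sigma, Finset.mem_range] at h ⊢
  · omega
  · omega
  · have : a - b + b = a := by omega
    simp [this]
  · have : a + b - b = a := by omega
    simp [this]
  · have : a - b + b = a := by omega
    simp [this]

private theorem npw9 {A : Type*} [CommRing A] {a b : ℕ} (h : b ≤ a) :
    (-1 : A) ^ (a - b) = (-1) ^ a * (-1) ^ b := by
  have h2 : a - b + b = a := by omega
  calc (-1:A)^(a-b) = (-1)^(a-b) * ((-1)^b * (-1)^b) := by
        rw [← pow_add, ← two_mul, pow_mul, neg_one_sq, one_pow, mul_one]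
    _ = (-1)^a * (-1)^b := by rw [← mul_assoc, ← pow_add, h2]

private theorem reindex9 {A : Type*} [CommRing A] [Algebra ℚ A] (n : ℕ) (x : A) (g : ℕ → A) :
    ∑ k ∈ Finset.range (n+1),
        (-1:A)^k * (((Nat.factorial n : ℚ)/(Nat.factorial (n-k) : ℚ)) • (g (k+1) * x^(n-k)))
      = (-1:A)^n * ((Nat.factorial n : ℚ) •
          ∑ m ∈ Finset.range (n+1),
            ((-1:ℚ)^m / (Nat.factorial m : ℚ)) • (g (n+1-m) * x^m)) := by
  rw [← Finset.sum_range_reflect, Finset.smul_sum, Finset.mul_sum]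
  refine Finset.sum_congr rfl fun m hm => ?_
  have hmn : m ≤ n := by simpa [Nat.lt_succ_iff] using hm
  have h1 : n + 1 - 1 - m = n - m := by omega
  have h2 : n - (n - m) = m := by omega
  have h3 : n - m + 1 = n + 1 - m := by omega
  rw [h1, h2, h3, npw9 hmn, smul_smul]
  have h4 : (Nat.factorial n : ℚ) * ((-1:ℚ)^m / (Nat.factorial m : ℚ))
      = (-1:ℚ)^m * ((Nat.factorial n : ℚ) / (Nat.factorial m : ℚ)) := by ring
  rw [h4, mul_smul]
  have h5 : ((-1:ℚ)^m) • (((Nat.factorial n : ℚ) / (Nat.factorial m : ℚ)) • (g (n+1-m) * x^m))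
      = (-1:A)^m * (((Nat.factorial n : ℚ) / (Nat.factorial m : ℚ)) • (g (n+1-m) * x^m)) := by
    rw [Algebra.smul_def, map_pow, map_neg, map_one]
  rw [h5, ← mul_assoc]

theorem stmt9 {A : Type*} [CommRing A] [Algebra ℚ A]
    (n : ℕ) (x y : A) (li Li : ℕ → A) (f : ℕ → A)
    (hf : ∀ k ≤ n, f (k + 1) = Li (k + 1) -
      ∑ l ∈ Finset.range (k + 1),
        (1 / (Nat.factorial l : ℚ)) • ((x - y) ^ l * li (k + 1 - l)))
    (LS Lz : A)
    (hLS : LS = ∑ m ∈ Finset.range (n + 1),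
      ((-1 : ℚ) ^ m / (Nat.factorial m : ℚ)) • (Li (n + 1 - m) * x ^ m))
    (hLz : Lz = ∑ m ∈ Finset.range (n + 1),
      ((-1 : ℚ) ^ m / (Nat.factorial m : ℚ)) • (li (n + 1 - m) * y ^ m)) :
    -∑ k ∈ Finset.range (n + 1),
        (-1 : A) ^ k *
          (((Nat.factorial n : ℚ) / (Nat.factorial (n - k) : ℚ)) •
            (f (k + 1) * x ^ (n - k)))
      = (-1 : A) ^ n * ((Nat.factorial n : ℚ) • (Lz - LS)) := by
  have step1 : (∑ k ∈ Finset.range (n+1),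
        (-1:A)^k * (((Nat.factorial n : ℚ)/(Nat.factorial (n-k) : ℚ)) • (f (k+1) * x^(n-k))))
      = (∑ k ∈ Finset.range (n+1),
          (-1:A)^k * (((Nat.factorial n : ℚ)/(Nat.factorial (n-k) : ℚ)) • (Li (k+1) * x^(n-k))))
        - ∑ k ∈ Finset.range (n+1), ∑ l ∈ Finset.range (k+1),
            (-1:A)^k * ((((Nat.factorial n : ℚ)/(Nat.factorial (n-k) : ℚ)) * (1/(Nat.factorial l : ℚ))) •
              ((x-y)^l * li (k+1-l) * x^(n-k))) := by
    rw [← Finset.sum_sub_distrib]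
    refine Finset.sum_congr rfl fun k hk => ?_
    rw [hf k (Finset.mem_range_succ_iff.mp hk), sub_mul, smul_sub, mul_sub]
    congr 1
    rw [Finset.sum_mul, Finset.smul_sum, Finset.mul_sum]
    refine Finset.sum_congr rfl fun l hl => ?_
    rw [smul_mul_assoc, smul_smul]
  have step2 : (∑ k ∈ Finset.range (n+1), ∑ l ∈ Finset.range (k+1),
        (-1:A)^k * ((((Nat.factorial n : ℚ)/(Nat.factorial (n-k) : ℚ)) * (1/(Nat.factorial l : ℚ))) •
          ((x-y)^l * li (k+1-l) * x^(n-k))))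
      = ∑ j ∈ Finset.range (n+1),
          (-1:A)^j * (((Nat.factorial n : ℚ)/(Nat.factorial (n-j) : ℚ)) • (li (j+1) * y^(n-j))) := by
    rw [tri9]
    refine Finset.sum_congr rfl fun j hj => ?_
    have hjn : j ≤ n := Finset.mem_range_succ_iff.mp hj
    conv_rhs => rw [show (y : A) = (y - x) + x by ring, add_pow]
    rw [Finset.mul_sum, Finset.smul_sum, Finset.mul_sum]
    refine Finset.sum_congr rfl fun l hl => ?_
    have hlN : l ≤ n - j := Finset.mem_range_succ_iff.mp hl
    have e1 : j + l + 1 - l = j + 1 := by omega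
    have e2 : n - (j + l) = n - j - l := by omega
    rw [e1, e2]
    have hc : ((Nat.factorial n : ℚ)/(Nat.factorial (n - (j+l)) : ℚ)) * (1/(Nat.factorial l : ℚ))
        = ((n-j).choose l : ℚ) * ((Nat.factorial n : ℚ)/(Nat.factorial (n-j) : ℚ)) := by
      rw [e2, Nat.cast_choose ℚ hlN]
      have f1 : (Nat.factorial (n-j-l) : ℚ) ≠ 0 := Nat.cast_ne_zero.mpr (Nat.factorial_ne_zero _)
      have f2 : (Nat.factorial l : ℚ) ≠ 0 := Nat.cast_ne_zero.mpr (Nat.factorial_ne_zero _)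
      have f3 : (Nat.factorial (n-j) : ℚ) ≠ 0 := Nat.cast_ne_zero.mpr (Nat.factorial_ne_zero _)
      field_simp
    rw [e2] at hc
    rw [hc, mul_smul, Nat.cast_smul_eq_nsmul, nsmul_eq_mul]
    simp only [mul_smul_comm, smul_mul_assoc]
    congr 1
    have key : (-1:A)^(j+l) * (x-y)^l = (-1)^j * (y-x)^l := by
      rw [pow_add, mul_assoc, ← mul_pow]
      congr 2
      ring
    linear_combination ((((n-j).choose l : A)) * li (j+1) * x^(n-j-l)) * key
  rw [hLS, hLz, step1, step2, neg_sub, reindex9, reindex9, smul_sub]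
  ring
end

section
/- Let K be a field and for i = 1, 2, 3 let V_i = K ⊕ E_i be K-vector spaces equipped with K-linear endomorphisms φ_i acting as the identity on the K-summand, such that φ_i has no nonzero fixed vectors on E_i for each i, and φ_1 ⊗ φ_2 has no nonzero fixed vectors on E_1 ⊗ E_2. Let Π_i : V_i → K be the projections onto the K-summands. Suppose ⟨·,·⟩ : V_1 × V_2 → V_3 is a K-bilinear pairing satisfying ⟨φ_1 x, φ_2 y⟩ = φ_3 ⟨x,y⟩ and ⟨(a,0),(b,0)⟩ = (ab, 0) for a, b ∈ K. Then Π_3(⟨x_1, x_2⟩) = Π_1(x_1) · Π_2(x_2) for all x_1 ∈ V_1, x_2 ∈ V_2. -/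
/-! Write `V₁ = K ⊕ E₁`, `V₂ = K ⊕ E₂`. The scalar part of the pairing is a φ-invariant bilinear
form on `V₁ × V₂`; restricted to `K × E₂`, `E₁ × K` and `E₁ × E₂` it gives linear functionals
on `E₂`, `E₁` and `E₁ ⊗ E₂` invariant under an endomorphism `T` without nonzero fixed vectors.
In finite dimension `T - 1` is then bijective, so such a functional, which kills the image of
`T - 1`, vanishes. Only the `K × K` part survives, and there the pairing is multiplication. -/

open TensorProduct

theorem LinearMap.eq_zero_of_comp_eq_self {K V W : Type*} [Field K] [AddCommGroup V] [Module K V]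
    [FiniteDimensional K V] [AddCommGroup W] [Module K W] {T : V →ₗ[K] V}
    (hT : ∀ v, T v = v → v = 0) {f : V →ₗ[K] W} (hf : f ∘ₗ T = f) : f = 0 := by
  have hinj : ker (T - id) = ⊥ :=
    ker_eq_bot'.mpr fun v hv ↦ hT v <| by simpa [sub_eq_zero] using hv
  have hsurj : Function.Surjective ⇑(T - id : V →ₗ[K] V) :=
    injective_iff_surjective.mp (ker_eq_bot.mp hinj)
  ext v
  obtain ⟨w, rfl⟩ := hsurj v
  simpa [sub_eq_zero] using LinearMap.congr_fun hf w

theorem LinearMap.eq_zero_of_compl₁₂_eq_self {K E₁ E₂ W : Type*} [Field K]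
    [AddCommGroup E₁] [Module K E₁] [AddCommGroup E₂] [Module K E₂]
    [FiniteDimensional K E₁] [FiniteDimensional K E₂] [AddCommGroup W] [Module K W]
    {ψ₁ : E₁ →ₗ[K] E₁} {ψ₂ : E₂ →ₗ[K] E₂}
    (h₁₂ : ∀ t : E₁ ⊗[K] E₂, map ψ₁ ψ₂ t = t → t = 0)
    {C : E₁ →ₗ[K] E₂ →ₗ[K] W} (hC : C.compl₁₂ ψ₁ ψ₂ = C) : C = 0 := by
  have hlift : lift C = 0 :=
    eq_zero_of_comp_eq_self h₁₂ (by rw [lift_comp_map]; exact congrArg lift hC)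
  ext u w
  simpa using LinearMap.congr_fun hlift (u ⊗ₜ w)

theorem LinearMap.apply_eq_apply_fst_fst_of_invariant {K E₁ E₂ W : Type*} [Field K]
    [AddCommGroup E₁] [Module K E₁] [AddCommGroup E₂] [Module K E₂]
    [FiniteDimensional K E₁] [FiniteDimensional K E₂] [AddCommGroup W] [Module K W]
    {ψ₁ : E₁ →ₗ[K] E₁} {ψ₂ : E₂ →ₗ[K] E₂}
    (h₁ : ∀ e, ψ₁ e = e → e = 0) (h₂ : ∀ e, ψ₂ e = e → e = 0)
    (h₁₂ : ∀ t : E₁ ⊗[K] E₂, map ψ₁ ψ₂ t = t → t = 0)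
    {β : (K × E₁) →ₗ[K] (K × E₂) →ₗ[K] W}
    (hβ : ∀ x y, β (x.1, ψ₁ x.2) (y.1, ψ₂ y.2) = β x y) (x : K × E₁) (y : K × E₂) :
    β x y = β (x.1, 0) (y.1, 0) := by
  obtain ⟨a, u⟩ := x
  obtain ⟨b, w⟩ := y
  have hKE : (β (a, 0)).comp (inr K K E₂) = 0 :=
    eq_zero_of_comp_eq_self h₂ <| by ext e; simpa using hβ (a, 0) (0, e)
  have hEK : (β.flip (b, 0)).comp (inr K K E₁) = 0 :=
    eq_zero_of_comp_eq_self h₁ <| by ext e; simpa using hβ (0, e) (b, 0)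
  have hEE : (β.comp (inr K K E₁)).compl₂ (inr K K E₂) = 0 :=
    eq_zero_of_compl₁₂_eq_self h₁₂ <| by ext e e'; simpa using hβ (0, e) (0, e')
  have hKE' : β (a, 0) (0, w) = 0 := by simpa using LinearMap.congr_fun hKE w
  have hEK' : β (0, u) (b, 0) = 0 := by simpa using LinearMap.congr_fun hEK u
  have hEE' : β (0, u) (0, w) = 0 := by simpa using LinearMap.congr_fun₂ hEE u w
  calc β (a, u) (b, w) = β ((a, 0) + (0, u)) ((b, 0) + (0, w)) := by simp
    _ = β (a, 0) (b, 0) := by simp only [map_add, add_apply, hKE', hEK', hEE', add_zero]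

theorem stmt15_general {K E₁ E₂ E₃ : Type*} [Field K]
    [AddCommGroup E₁] [Module K E₁] [AddCommGroup E₂] [Module K E₂]
    [AddCommGroup E₃] [Module K E₃]
    [FiniteDimensional K E₁] [FiniteDimensional K E₂]
    (ψ₁ : E₁ →ₗ[K] E₁) (ψ₂ : E₂ →ₗ[K] E₂) (ψ₃ : E₃ →ₗ[K] E₃)
    (h₁ : ∀ e : E₁, ψ₁ e = e → e = 0)
    (h₂ : ∀ e : E₂, ψ₂ e = e → e = 0)
    (h₁₂ : ∀ t : E₁ ⊗[K] E₂, TensorProduct.map ψ₁ ψ₂ t = t → t = 0)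
    (B : (K × E₁) →ₗ[K] (K × E₂) →ₗ[K] (K × E₃))
    (hBphi : ∀ (x : K × E₁) (y : K × E₂),
      B (x.1, ψ₁ x.2) (y.1, ψ₂ y.2) = ((B x y).1, ψ₃ (B x y).2))
    (hBK : ∀ a b : K, B (a, 0) (b, 0) = (a * b, 0)) :
    ∀ (x : K × E₁) (y : K × E₂), (B x y).1 = x.1 * y.1 := by
  intro x y
  have hfst : ∀ x y, B.compr₂ (LinearMap.fst K K E₃) (x.1, ψ₁ x.2) (y.1, ψ₂ y.2) =
      B.compr₂ (LinearMap.fst K K E₃) x y := fun x y ↦ by simp [hBphi]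
  simpa [hBK] using LinearMap.apply_eq_apply_fst_fst_of_invariant h₁ h₂ h₁₂ hfst x y

theorem stmt15 {K E₁ E₂ E₃ : Type*} [Field K]
    [AddCommGroup E₁] [Module K E₁] [AddCommGroup E₂] [Module K E₂]
    [AddCommGroup E₃] [Module K E₃]
    [FiniteDimensional K E₁] [FiniteDimensional K E₂] [FiniteDimensional K E₃]
    (ψ₁ : E₁ →ₗ[K] E₁) (ψ₂ : E₂ →ₗ[K] E₂) (ψ₃ : E₃ →ₗ[K] E₃)
    (h₁ : ∀ e : E₁, ψ₁ e = e → e = 0)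
    (h₂ : ∀ e : E₂, ψ₂ e = e → e = 0)
    (h₃ : ∀ e : E₃, ψ₃ e = e → e = 0)
    (h₁₂ : ∀ t : E₁ ⊗[K] E₂, TensorProduct.map ψ₁ ψ₂ t = t → t = 0)
    (B : (K × E₁) →ₗ[K] (K × E₂) →ₗ[K] (K × E₃))
    (hBphi : ∀ (x : K × E₁) (y : K × E₂),
      B (x.1, ψ₁ x.2) (y.1, ψ₂ y.2) = ((B x y).1, ψ₃ (B x y).2))
    (hBK : ∀ a b : K, B (a, 0) (b, 0) = (a * b, 0)) :
    ∀ (x : K × E₁) (y : K × E₂), (B x y).1 = x.1 * y.1 :=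
  stmt15_general ψ₁ ψ₂ ψ₃ h₁ h₂ h₁₂ B hBphi hBK
end
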